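/- Let T be a bounded linear operator on a complex Banach space X. If σ(T) is the disjoint union of σ_BW(T) and Π(T), then σ_BW(T) equals the Drazin spectrum σ_D(T) and σ_W(T) equals the Browder spectrum σ_B(T). -/

import Mathlib

open LinearMap Module

namespace SpectralPartition

variable {X : Type*} [NormedAddCommGroup X] [NormedSpace ℂ X] [CompleteSpace X]

/-- `T - λ I`. -/
noncomputable def lam (T : X →L[ℂ] X) (l : ℂ) : X →L[ℂ] X := T - l • (1 : X →L[ℂ] X)

/-- `T` maps the range of `T ^ n` into itself. -/
theorem maps_range_pow (T : X →L[ℂ] X) (n : ℕ) :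
    ∀ x ∈ LinearMap.range ((T ^ n : X →L[ℂ] X) : X →ₗ[ℂ] X), (T : X →ₗ[ℂ] X) x ∈ LinearMap.range ((T ^ n : X →L[ℂ] X) : X →ₗ[ℂ] X) := by
  rintro x ⟨y, rfl⟩
  refine ⟨T y, ?_⟩
  have h : T ^ n * T = T * T ^ n := by rw [← pow_succ, ← pow_succ']
  calc (T ^ n) (T y) = (T ^ n * T) y := (ContinuousLinearMap.mul_apply _ _ _).symm
    _ = (T * T ^ n) y := by rw [h]
    _ = T ((T ^ n) y) := ContinuousLinearMap.mul_apply _ _ _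

/-- The restriction `T_[n]` of `T` to the range of `T ^ n`. -/
noncomputable def restr (T : X →L[ℂ] X) (n : ℕ) :
    LinearMap.range ((T ^ n : X →L[ℂ] X) : X →ₗ[ℂ] X) →ₗ[ℂ] LinearMap.range ((T ^ n : X →L[ℂ] X) : X →ₗ[ℂ] X) :=
  (T : X →ₗ[ℂ] X).restrict (maps_range_pow T n)

/-- Weyl operator: Fredholm of index `0`. -/
def IsWeyl (T : X →L[ℂ] X) : Prop :=
  IsClosed ((LinearMap.range ((T : X →L[ℂ] X) : X →ₗ[ℂ] X) : Submodule ℂ X) : Set X) ∧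
  FiniteDimensional ℂ (LinearMap.ker ((T : X →L[ℂ] X) : X →ₗ[ℂ] X)) ∧
  FiniteDimensional ℂ (X ⧸ LinearMap.range ((T : X →L[ℂ] X) : X →ₗ[ℂ] X)) ∧
  finrank ℂ (LinearMap.ker ((T : X →L[ℂ] X) : X →ₗ[ℂ] X)) = finrank ℂ (X ⧸ LinearMap.range ((T : X →L[ℂ] X) : X →ₗ[ℂ] X))

/-- B-Weyl operator: for some `n`, `R(T^n)` is closed and `T_[n]` is Fredholm of index `0`. -/
def IsBWeyl (T : X →L[ℂ] X) : Prop :=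
  ∃ n : ℕ, IsClosed ((LinearMap.range ((T ^ n : X →L[ℂ] X) : X →ₗ[ℂ] X) : Submodule ℂ X) : Set X) ∧
    IsClosed ((LinearMap.range ((T ^ (n + 1) : X →L[ℂ] X) : X →ₗ[ℂ] X) : Submodule ℂ X) : Set X) ∧
    FiniteDimensional ℂ (LinearMap.ker (restr T n)) ∧
    FiniteDimensional ℂ (↥(LinearMap.range ((T ^ n : X →L[ℂ] X) : X →ₗ[ℂ] X)) ⧸ LinearMap.range (restr T n)) ∧
    finrank ℂ (LinearMap.ker (restr T n)) =
      finrank ℂ (↥(LinearMap.range ((T ^ n : X →L[ℂ] X) : X →ₗ[ℂ] X)) ⧸ LinearMap.range (restr T n))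

/-- Weyl spectrum. -/
noncomputable def σW (T : X →L[ℂ] X) : Set ℂ := {l | ¬ IsWeyl (lam T l)}

/-- B-Weyl spectrum. -/
noncomputable def σBW (T : X →L[ℂ] X) : Set ℂ := {l | ¬ IsBWeyl (lam T l)}

/-- `l` is an isolated point of the set `s`. -/
def IsolatedIn (l : ℂ) (s : Set ℂ) : Prop := l ∈ s ∧ ∃ U ∈ nhds l, U ∩ s = {l}

/-- Approximate point spectrum: `T - λ` is not bounded below. -/
noncomputable def σa (T : X →L[ℂ] X) : Set ℂ :=
  {l | ¬ ∃ c > (0 : ℝ), ∀ x : X, c * ‖x‖ ≤ ‖lam T l x‖}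

/-- Eigenvalues of `T` isolated in the spectrum. -/
noncomputable def Espec (T : X →L[ℂ] X) : Set ℂ :=
  {l | LinearMap.ker ((lam T l : X →L[ℂ] X) : X →ₗ[ℂ] X) ≠ ⊥ ∧ IsolatedIn l (spectrum ℂ T)}

/-- Eigenvalues of finite multiplicity isolated in the spectrum. -/
noncomputable def E0spec (T : X →L[ℂ] X) : Set ℂ :=
  {l | l ∈ Espec T ∧ FiniteDimensional ℂ (LinearMap.ker ((lam T l : X →L[ℂ] X) : X →ₗ[ℂ] X))}

/-- Eigenvalues of `T` isolated in the approximate point spectrum. -/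
noncomputable def Ea (T : X →L[ℂ] X) : Set ℂ :=
  {l | LinearMap.ker ((lam T l : X →L[ℂ] X) : X →ₗ[ℂ] X) ≠ ⊥ ∧ IsolatedIn l (σa T)}

/-- Eigenvalues of finite multiplicity isolated in the approximate point spectrum. -/
noncomputable def Ea0 (T : X →L[ℂ] X) : Set ℂ :=
  {l | l ∈ Ea T ∧ FiniteDimensional ℂ (LinearMap.ker ((lam T l : X →L[ℂ] X) : X →ₗ[ℂ] X))}

/-- The kernels of powers of `S` stabilize at `n` (ascent ≤ n). -/
def KerStab (S : X →L[ℂ] X) (n : ℕ) : Prop :=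
  LinearMap.ker ((S ^ n : X →L[ℂ] X) : X →ₗ[ℂ] X) = LinearMap.ker ((S ^ (n + 1) : X →L[ℂ] X) : X →ₗ[ℂ] X)

/-- The ranges of powers of `S` stabilize at `n` (descent ≤ n). -/
def RanStab (S : X →L[ℂ] X) (n : ℕ) : Prop :=
  LinearMap.range ((S ^ n : X →L[ℂ] X) : X →ₗ[ℂ] X) = LinearMap.range ((S ^ (n + 1) : X →L[ℂ] X) : X →ₗ[ℂ] X)

/-- Drazin invertible: finite ascent and finite descent. -/
def IsDrazinInv (S : X →L[ℂ] X) : Prop :=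
  (∃ n, KerStab S n) ∧ (∃ n, RanStab S n)

/-- `l` is a pole of the resolvent of `T`. -/
noncomputable def IsPole (T : X →L[ℂ] X) (l : ℂ) : Prop :=
  l ∈ spectrum ℂ T ∧ IsDrazinInv (lam T l)

/-- Set of poles of the resolvent of `T`. -/
noncomputable def Poles (T : X →L[ℂ] X) : Set ℂ := {l | IsPole T l}

/-- Set of poles of finite rank of `T`. -/
noncomputable def Poles0 (T : X →L[ℂ] X) : Set ℂ :=
  {l | IsPole T l ∧ FiniteDimensional ℂ (LinearMap.ker ((lam T l : X →L[ℂ] X) : X →ₗ[ℂ] X))}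

/-- Drazin spectrum. -/
noncomputable def σD (T : X →L[ℂ] X) : Set ℂ := {l | ¬ IsDrazinInv (lam T l)}

/-- Browder operator: Fredholm of finite ascent and descent. -/
def IsBrowder (S : X →L[ℂ] X) : Prop :=
  IsClosed ((LinearMap.range ((S : X →L[ℂ] X) : X →ₗ[ℂ] X) : Submodule ℂ X) : Set X) ∧
  FiniteDimensional ℂ (LinearMap.ker ((S : X →L[ℂ] X) : X →ₗ[ℂ] X)) ∧
  FiniteDimensional ℂ (X ⧸ LinearMap.range ((S : X →L[ℂ] X) : X →ₗ[ℂ] X)) ∧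
  (∃ n, KerStab S n) ∧ (∃ n, RanStab S n)

/-- Browder spectrum. -/
noncomputable def σB (T : X →L[ℂ] X) : Set ℂ := {l | ¬ IsBrowder (lam T l)}

/-- Upper semi-Weyl: upper semi-Fredholm with index ≤ 0. -/
def IsUpperSemiWeyl (S : X →L[ℂ] X) : Prop :=
  IsClosed ((LinearMap.range ((S : X →L[ℂ] X) : X →ₗ[ℂ] X) : Submodule ℂ X) : Set X) ∧
  FiniteDimensional ℂ (LinearMap.ker ((S : X →L[ℂ] X) : X →ₗ[ℂ] X)) ∧
  Module.rank ℂ (LinearMap.ker ((S : X →L[ℂ] X) : X →ₗ[ℂ] X)) ≤ Module.rank ℂ (X ⧸ LinearMap.range ((S : X →L[ℂ] X) : X →ₗ[ℂ] X))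

/-- Upper semi-Weyl spectrum `σ_{SF₊⁻}`. -/
noncomputable def σSF (T : X →L[ℂ] X) : Set ℂ := {l | ¬ IsUpperSemiWeyl (lam T l)}

/-- Upper semi-B-Weyl: for some `n`, `R(S^n)` is closed and `S_[n]` is
upper semi-Fredholm with index ≤ 0. -/
def IsUpperSemiBWeyl (S : X →L[ℂ] X) : Prop :=
  ∃ n : ℕ, IsClosed ((LinearMap.range ((S ^ n : X →L[ℂ] X) : X →ₗ[ℂ] X) : Submodule ℂ X) : Set X) ∧
    IsClosed ((LinearMap.range ((S ^ (n + 1) : X →L[ℂ] X) : X →ₗ[ℂ] X) : Submodule ℂ X) : Set X) ∧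
    FiniteDimensional ℂ (LinearMap.ker (restr S n)) ∧
    Module.rank ℂ (LinearMap.ker (restr S n)) ≤
      Module.rank ℂ (↥(LinearMap.range ((S ^ n : X →L[ℂ] X) : X →ₗ[ℂ] X)) ⧸ LinearMap.range (restr S n))

/-- Upper semi-B-Weyl spectrum `σ_{SBF₊⁻}`. -/
noncomputable def σSBF (T : X →L[ℂ] X) : Set ℂ := {l | ¬ IsUpperSemiBWeyl (lam T l)}

/-- `l` is a left pole of `T`: `l ∈ σ_a(T)`, the ascent `a` of `T - l` is finite
and `R((T-l)^{a+1})` is closed. -/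
noncomputable def IsLeftPole (T : X →L[ℂ] X) (l : ℂ) : Prop :=
  l ∈ σa T ∧ ∃ n : ℕ, KerStab (lam T l) n ∧ (∀ m < n, ¬ KerStab (lam T l) m) ∧
    IsClosed ((LinearMap.range (((lam T l) ^ (n + 1) : X →L[ℂ] X) : X →ₗ[ℂ] X) : Submodule ℂ X) : Set X)

/-- Set of left poles of `T`. -/
noncomputable def PolesA (T : X →L[ℂ] X) : Set ℂ := {l | IsLeftPole T l}

/-- Set of left poles of `T` of finite rank. -/
noncomputable def PolesA0 (T : X →L[ℂ] X) : Set ℂ :=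
  {l | IsLeftPole T l ∧ FiniteDimensional ℂ (LinearMap.ker ((lam T l : X →L[ℂ] X) : X →ₗ[ℂ] X))}

end SpectralPartition

/-!
Outside `σ(T)` the operator `T - λ` is invertible, hence Weyl, B-Weyl and Drazin invertible, so
all the spectra involved lie in `σ(T)`; a Weyl operator is B-Weyl (take `n = 0`). As the poles are
`σ(T) \ σ_D(T)`, the hypothesis says that `σ_BW(T)` and `σ_D(T)` are both the complement of the
poles in `σ(T)`, so they coincide.

A Browder operator is exactly a Weyl operator that is Drazin invertible: finite ascent and descent
force index `0`, because for large `p` the Fitting decomposition `X = ker S^p ⊕ R(S^p)` reduces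
`ker S` and `X / R(S)` to the kernel and cokernel of `S` on the finite-dimensional `ker S^p`.
Hence `σ_B = σ_W ∪ σ_D = σ_W ∪ σ_BW = σ_W`.
-/

namespace Module.End

section Semiring

variable {R M : Type*} [Semiring R] [AddCommMonoid M] [Module R M]

theorem range_pow_constant {f : End R M} {k : ℕ}
    (h : range (f ^ k) = range (f ^ (k + 1))) :
    ∀ m, range (f ^ k) = range (f ^ (k + m))
  | 0 => rfl
  | m + 1 => by
    rw [← add_assoc, pow_succ', mul_eq_comp, range_comp, ← range_pow_constant h m,
      ← range_comp, ← mul_eq_comp, ← pow_succ', h]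

theorem map_ker_eq_of_comp_eq {M' : Type*} [AddCommMonoid M'] [Module R M'] (e : M ≃ₗ[R] M')
    {g : End R M} {f : End R M'} (h : e.toLinearMap ∘ₗ g = f ∘ₗ e.toLinearMap) :
    (ker g).map e.toLinearMap = ker f := by
  rw [← LinearEquiv.ker_comp e g, h, ker_comp, Submodule.map_comap_eq_of_surjective e.surjective]

theorem map_range_eq_of_comp_eq {M' : Type*} [AddCommMonoid M'] [Module R M'] (e : M ≃ₗ[R] M')
    {g : End R M} {f : End R M'} (h : e.toLinearMap ∘ₗ g = f ∘ₗ e.toLinearMap) :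
    (range g).map e.toLinearMap = range f := by
  rw [← range_comp, h, range_comp_of_range_eq_top f e.range]

end Semiring

section Ring

variable {R M : Type*} [Ring R] [AddCommGroup M] [Module R M]

theorem isCompl_ker_pow_range_pow {f : End R M} {p : ℕ}
    (hker : ker (f ^ p) = ker (f ^ (p + p))) (hrange : range (f ^ p) = range (f ^ (p + p))) :
    IsCompl (ker (f ^ p)) (range (f ^ p)) := by
  constructor
  · rw [Submodule.disjoint_def]
    rintro - hx ⟨y, rfl⟩
    rwa [mem_ker, ← mul_apply, ← pow_add, ← mem_ker, ← hker] at hx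
  · rw [codisjoint_iff, Submodule.eq_top_iff']
    intro x
    obtain ⟨z, hz⟩ : (f ^ p) x ∈ range (f ^ (p + p)) := hrange ▸ mem_range_self _ x
    refine Submodule.mem_sup.2
      ⟨x - (f ^ p) z, ?_, (f ^ p) z, mem_range_self _ z, sub_add_cancel _ _⟩
    rw [mem_ker, map_sub, ← mul_apply, ← pow_add, hz, sub_self]

end Ring

section DivisionRing

variable {K V : Type*} [DivisionRing K] [AddCommGroup V] [Module K V]

theorem finiteDimensional_ker_pow (f : End K V) [FiniteDimensional K (ker f)] :
    ∀ n, FiniteDimensional K (ker (f ^ n))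
  | 0 => by rw [pow_zero, one_eq_id, ker_id]; infer_instance
  | n + 1 => by
    have := finiteDimensional_ker_pow f n
    rw [← Submodule.fg_iff_finiteDimensional]
    refine Submodule.fg_of_fg_map_of_fg_inf_ker f ?_ ?_
    · refine (Submodule.fg_iff_finiteDimensional _).2
        (Submodule.finiteDimensional_of_le (S₂ := ker (f ^ n)) ?_)
      rintro - ⟨x, hx, rfl⟩
      rwa [SetLike.mem_coe, mem_ker, pow_succ, mul_apply] at hx
    · exact (Submodule.fg_iff_finiteDimensional _).2
        (Submodule.finiteDimensional_of_le inf_le_right)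

theorem finrank_ker_eq_finrank_quotient_range_of_isCompl {f : End K V} {N R : Submodule K V}
    (hNR : IsCompl N R) [FiniteDimensional K N] (hN : ∀ x ∈ N, f x ∈ N) (hR : ∀ x ∈ R, f x ∈ R)
    (hker : ker f ≤ N) (hrange : R ≤ range f) :
    finrank K (ker f) = finrank K (V ⧸ range f) := by
  set g := f.restrict hN
  -- `N ∩ range f = f(N)`: if `f (n + r) ∈ N` then `f r ∈ N ∩ R = 0`
  have hNrange : Submodule.comap N.subtype (range f) = range g := by
    ext ⟨x, hx⟩
    refine ⟨?_, fun ⟨y, hy⟩ ↦ ⟨y, congrArg Subtype.val hy⟩⟩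
    rintro ⟨y, rfl⟩
    obtain ⟨n, hn, r, hr, rfl⟩ := Submodule.mem_sup.1 (hNR.sup_eq_top ▸ Submodule.mem_top (x := y))
    have hfr : f r = 0 := by
      refine Submodule.disjoint_def.1 hNR.disjoint _ ?_ (hR r hr)
      simpa using N.sub_mem hx (hN n hn)
    exact ⟨⟨n, hn⟩, Subtype.ext (by simp [g, hfr])⟩
  let φ := (range f).mkQ ∘ₗ N.subtype
  have hφ : Function.Surjective φ := by
    rintro ⟨x⟩
    obtain ⟨n, hn, r, hr, rfl⟩ := Submodule.mem_sup.1 (hNR.sup_eq_top ▸ Submodule.mem_top (x := x))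
    refine ⟨⟨n, hn⟩, (Submodule.Quotient.eq _).2 ?_⟩
    simpa using neg_mem (hrange hr)
  have hφker : ker φ = range g := by
    rw [ker_comp, Submodule.ker_mkQ, hNrange]
  let e : (V ⧸ range f) ≃ₗ[K] (↥N ⧸ range g) :=
    (φ.quotKerEquivOfSurjective hφ).symm.trans (Submodule.quotEquivOfEq _ _ hφker)
  have hkerg : finrank K (ker g) = finrank K (ker f) := by
    rw [ker_restrict]; exact (Submodule.comapSubtypeEquivOfLe hker).finrank_eq
  rw [e.finrank_eq, ← hkerg]
  have := g.finrank_range_add_finrank_ker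
  have := (range g).finrank_quotient_add_finrank
  omega

theorem finrank_ker_eq_finrank_quotient_range (f : End K V) [FiniteDimensional K (ker f)]
    {n m : ℕ} (hn : ker (f ^ n) = ker (f ^ (n + 1))) (hm : range (f ^ m) = range (f ^ (m + 1))) :
    finrank K (ker f) = finrank K (V ⧸ range f) := by
  have hker (k : ℕ) (hk : n ≤ k) : ker (f ^ k) = ker (f ^ n) := by
    obtain ⟨c, rfl⟩ := Nat.exists_eq_add_of_le hk
    exact (ker_pow_constant hn c).symm
  have hrange (k : ℕ) (hk : m ≤ k) : range (f ^ k) = range (f ^ m) := by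
    obtain ⟨c, rfl⟩ := Nat.exists_eq_add_of_le hk
    exact (range_pow_constant hm c).symm
  set p := n + m + 1
  have hcompl : IsCompl (ker (f ^ p)) (range (f ^ p)) := by
    refine isCompl_ker_pow_range_pow ?_ ?_
    · rw [hker p (by omega), hker (p + p) (by omega)]
    · rw [hrange p (by omega), hrange (p + p) (by omega)]
  have := finiteDimensional_ker_pow f p
  refine finrank_ker_eq_finrank_quotient_range_of_isCompl hcompl
    (fun x hx ↦ ?_) (fun x hx ↦ ?_) ?_ ?_
  · rw [mem_ker, ← mul_apply, ← pow_succ, pow_succ', mul_apply, mem_ker.1 hx, map_zero]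
  · obtain ⟨y, rfl⟩ := hx
    exact ⟨f y, by rw [← mul_apply, ← pow_succ, pow_succ', mul_apply]⟩
  · rw [pow_succ, mul_eq_comp]; exact ker_le_ker_comp f _
  · rw [pow_succ', mul_eq_comp]; exact range_comp_le_range _ f

end DivisionRing

end Module.End

namespace SpectralPartition

variable {X : Type*} [NormedAddCommGroup X] [NormedSpace ℂ X]

theorem coe_pow (S : X →L[ℂ] X) (n : ℕ) :
    ((S ^ n : X →L[ℂ] X) : X →ₗ[ℂ] X) = (S : X →ₗ[ℂ] X) ^ n :=
  map_pow ContinuousLinearMap.toLinearMapRingHom S n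

theorem IsWeyl.isBWeyl [CompleteSpace X] {S : X →L[ℂ] X} (h : IsWeyl S) : IsBWeyl S := by
  obtain ⟨hclosed, hker, hquot, hindex⟩ := h
  have htop : range ((S ^ 0 : X →L[ℂ] X) : X →ₗ[ℂ] X) = ⊤ := by
    rw [coe_pow, pow_zero, Module.End.one_eq_id, range_id]
  let e := LinearEquiv.ofTop _ htop
  have hconj : e.toLinearMap ∘ₗ restr S 0 = (S : X →ₗ[ℂ] X) ∘ₗ e.toLinearMap := rfl
  let eker := e.ofSubmodules _ _ (Module.End.map_ker_eq_of_comp_eq e hconj)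
  let equot := Submodule.Quotient.equiv _ _ e (Module.End.map_range_eq_of_comp_eq e hconj)
  refine ⟨0, ?_, ?_, eker.symm.finiteDimensional, equot.symm.finiteDimensional, ?_⟩
  · rw [htop, Submodule.top_coe]; exact isClosed_univ
  · rwa [zero_add, pow_one]
  · rw [eker.finrank_eq, equot.finrank_eq, hindex]

theorem ker_eq_bot_of_isUnit {S : X →L[ℂ] X} (hS : IsUnit S) : ker (S : X →ₗ[ℂ] X) = ⊥ :=
  ker_eq_bot_of_injective
    ((Module.End.isUnit_iff _).1 (hS.map ContinuousLinearMap.toLinearMapRingHom)).1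

theorem range_eq_top_of_isUnit {S : X →L[ℂ] X} (hS : IsUnit S) : range (S : X →ₗ[ℂ] X) = ⊤ :=
  range_eq_top_of_surjective _
    ((Module.End.isUnit_iff _).1 (hS.map ContinuousLinearMap.toLinearMapRingHom)).2

theorem isWeyl_of_isUnit {S : X →L[ℂ] X} (hS : IsUnit S) : IsWeyl S := by
  have := Submodule.Quotient.subsingleton_iff.2 (range_eq_top_of_isUnit hS)
  refine ⟨?_, ?_, inferInstance, ?_⟩
  · rw [range_eq_top_of_isUnit hS, Submodule.top_coe]; exact isClosed_univ
  · rw [ker_eq_bot_of_isUnit hS]; infer_instance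
  · rw [ker_eq_bot_of_isUnit hS, finrank_bot, finrank_zero_of_subsingleton]

theorem isDrazinInv_of_isUnit {S : X →L[ℂ] X} (hS : IsUnit S) : IsDrazinInv S :=
  ⟨⟨0, by rw [KerStab, ker_eq_bot_of_isUnit (hS.pow 0), ker_eq_bot_of_isUnit (hS.pow 1)]⟩,
    ⟨0, by rw [RanStab, range_eq_top_of_isUnit (hS.pow 0), range_eq_top_of_isUnit (hS.pow 1)]⟩⟩

theorem isBrowder_iff_isWeyl_and_isDrazinInv {S : X →L[ℂ] X} :
    IsBrowder S ↔ IsWeyl S ∧ IsDrazinInv S := by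
  constructor
  · rintro ⟨hclosed, hker, hquot, ⟨n, hn⟩, ⟨m, hm⟩⟩
    refine ⟨⟨hclosed, hker, hquot, ?_⟩, ⟨n, hn⟩, ⟨m, hm⟩⟩
    rw [KerStab, coe_pow, coe_pow] at hn
    rw [RanStab, coe_pow, coe_pow] at hm
    exact Module.End.finrank_ker_eq_finrank_quotient_range _ hn hm
  · rintro ⟨⟨hclosed, hker, hquot, -⟩, hasc, hdes⟩
    exact ⟨hclosed, hker, hquot, hasc, hdes⟩

theorem isUnit_lam_of_notMem_spectrum {T : X →L[ℂ] X} {l : ℂ} (h : l ∉ spectrum ℂ T) :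
    IsUnit (lam T l) := by
  rw [lam, ← neg_sub, ← Algebra.algebraMap_eq_smul_one]
  exact (spectrum.notMem_iff.1 h).neg

theorem σW_subset_spectrum (T : X →L[ℂ] X) : σW T ⊆ spectrum ℂ T :=
  fun _ hl ↦ not_imp_comm.1 (fun h ↦ isWeyl_of_isUnit (isUnit_lam_of_notMem_spectrum h)) hl

theorem σD_subset_spectrum (T : X →L[ℂ] X) : σD T ⊆ spectrum ℂ T :=
  fun _ hl ↦ not_imp_comm.1 (fun h ↦ isDrazinInv_of_isUnit (isUnit_lam_of_notMem_spectrum h)) hl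

theorem σBW_subset_σW [CompleteSpace X] (T : X →L[ℂ] X) : σBW T ⊆ σW T :=
  fun _ hl hW ↦ hl hW.isBWeyl

theorem σB_eq_σW_union_σD (T : X →L[ℂ] X) : σB T = σW T ∪ σD T := by
  ext l
  simp only [σB, σW, σD, Set.mem_union, Set.mem_ofPred, isBrowder_iff_isWeyl_and_isDrazinInv,
    not_and_or]

theorem poles_eq_spectrum_diff_σD (T : X →L[ℂ] X) : Poles T = spectrum ℂ T \ σD T := by
  ext l
  simp only [Poles, IsPole, σD, Set.mem_sdiff, Set.mem_ofPred, not_not]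

end SpectralPartition

open SpectralPartition in
/-- If generalized Browder's theorem holds for `T`, then the B-Weyl spectrum equals the
Drazin spectrum and the Weyl spectrum equals the Browder spectrum. -/
theorem gen_browder_spectra_eq {X : Type*} [NormedAddCommGroup X] [NormedSpace ℂ X]
    [CompleteSpace X] (T : X →L[ℂ] X)
    (hU : spectrum ℂ T = σBW T ∪ Poles T) (hD : σBW T ∩ Poles T = ∅) :
    σBW T = σD T ∧ σW T = σB T := by
  rw [poles_eq_spectrum_diff_σD] at hU hD
  have hσBW := (σBW_subset_σW T).trans (σW_subset_spectrum T)
  have hσD := σD_subset_spectrum T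
  have hσBW_eq_σD : σBW T = σD T := by
    refine Set.Subset.antisymm (fun l hl ↦ ?_) (fun l hl ↦ ?_)
    · by_contra hlD
      exact hD.subset ⟨hl, hσBW hl, hlD⟩
    · exact (hU.subset (hσD hl)).resolve_right fun hP ↦ hP.2 hl
  refine ⟨hσBW_eq_σD, ?_⟩
  rw [σB_eq_σW_union_σD, ← hσBW_eq_σD, Set.union_eq_left.2 (σBW_subset_σW T)]
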